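/- Let G be a finitely generated group whose word problem WP(G) is recursively enumerable, and let X ⊆ A^G be an effectively closed subshift. Then the maximal set of pattern codings defining X, namely C_max = {c a pattern coding over A : X ∩ ⋂_{(w,a)∈c} [a]_{w̄} = ∅}, is recursively enumerable, and X = X_{C_max}. -/

import Mathlib

open scoped Classical

noncomputable section

namespace SDG

/-! ### Relativized computability -/

/-- Partial recursive functions `ℕ →. ℕ` relative to an oracle `O`. -/
inductive NatPartrecIn (O : ℕ →. ℕ) : (ℕ →. ℕ) → Prop
  | oracle : NatPartrecIn O O
  | zero : NatPartrecIn O (pure 0)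
  | succ : NatPartrecIn O Nat.succ
  | left : NatPartrecIn O ↑fun n : ℕ => n.unpair.1
  | right : NatPartrecIn O ↑fun n : ℕ => n.unpair.2
  | pair {f g} : NatPartrecIn O f → NatPartrecIn O g →
      NatPartrecIn O fun n => Nat.pair <$> f n <*> g n
  | comp {f g} : NatPartrecIn O f → NatPartrecIn O g →
      NatPartrecIn O fun n => g n >>= f
  | prec {f g} : NatPartrecIn O f → NatPartrecIn O g →
      NatPartrecIn O (Nat.unpaired fun a n =>
        n.rec (f a) fun y IH => do let i ← IH; g (Nat.pair a (Nat.pair y i)))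
  | rfind {f} : NatPartrecIn O f →
      NatPartrecIn O fun a => Nat.rfind fun n => (fun m => m = 0) <$> f (Nat.pair a n)

/-- A partial function between `Primcodable` types is partial recursive in the oracle `O`. -/
def PartrecIn (O : ℕ →. ℕ) {α σ : Type} [Primcodable α] [Primcodable σ] (f : α →. σ) : Prop :=
  NatPartrecIn O fun n =>
    Part.bind (Part.ofOption (Encodable.decode (α := α) n)) fun a => (f a).map Encodable.encode

/-- A predicate is recursively enumerable in the oracle `O` if it is the domain of a partial
function recursive in `O`. -/
def RePredIn (O : ℕ →. ℕ) {α : Type} [Primcodable α] (p : α → Prop) : Prop :=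
  PartrecIn O fun a => Part.assert (p a) fun _ => Part.some ()

/-- The characteristic function (as an oracle `ℕ →. ℕ`) of a set `L` of elements of a
`Primcodable` type: on the code of an element of `L` it answers `1`, elsewhere `0`. -/
def charFun {α : Type} [Primcodable α] (L : Set α) : ℕ →. ℕ :=
  fun n => Part.some (if ∃ a ∈ L, Encodable.encode a = n then 1 else 0)

/-! ### Finitely generated groups, words and pattern codings -/

variable {G : Type} [Group G]

/-- The group element represented by a word over the generators `S`. -/
def wordEval {k : ℕ} (S : Fin k → G) (w : List (Fin k)) : G :=
  (w.map S).prod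

/-- `S : Fin k → G` is a finite symmetric generating family containing the identity. -/
def IsGenData {k : ℕ} (S : Fin k → G) : Prop :=
  (∃ i, S i = 1) ∧ (∀ i, ∃ j, S j = (S i)⁻¹) ∧ Subgroup.closure (Set.range S) = ⊤

/-- The word problem of `G` with respect to the generating family `S`. -/
def WP {k : ℕ} (S : Fin k → G) : Set (List (Fin k)) :=
  {w | wordEval S w = 1}

/-- A pattern coding over the alphabet `A`: a finite list of pairs (word, symbol). -/
abbrev PatternCoding (k : ℕ) (A : Type) : Type :=
  List (List (Fin k) × A)

/-- The subshift defined by a set `C` of pattern codings: configurations in which no translate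
of a coded pattern occurs. -/
def XC {k : ℕ} (S : Fin k → G) {A : Type} (C : Set (PatternCoding k A)) : Set (G → A) :=
  {x | ¬ ∃ (g : G) (c : PatternCoding k A), c ∈ C ∧ ∀ p ∈ c, x (g * wordEval S p.1) = p.2}

/-- A set is effectively closed if it is defined by a recursively enumerable set of
pattern codings. -/
def EffectivelyClosed {k : ℕ} (S : Fin k → G) {A : Type} [Primcodable A]
    (X : Set (G → A)) : Prop :=
  ∃ C : Set (PatternCoding k A), REPred (· ∈ C) ∧ X = XC S C

/-- A set is `G`-effectively closed if it is defined by a set of pattern codings which is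
recursively enumerable with oracle the word problem of `G`. -/
def GEffectivelyClosed {k : ℕ} (S : Fin k → G) {A : Type} [Primcodable A]
    (X : Set (G → A)) : Prop :=
  ∃ C : Set (PatternCoding k A), RePredIn (charFun (WP S)) (· ∈ C) ∧ X = XC S C

/-- A pattern coding is consistent if words representing the same group element receive the
same symbol. -/
def Consistent {k : ℕ} (S : Fin k → G) {A : Type} (c : PatternCoding k A) : Prop :=
  ∀ p ∈ c, ∀ q ∈ c, wordEval S p.1 = wordEval S q.1 → p.2 = q.2

/-! ### Subshifts, SFTs, sofic subshifts -/

/-- `X ⊆ A^G` is a subshift: closed (for the product of the discrete topology) and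
shift-invariant. -/
def IsSubshift {A : Type} (X : Set (G → A)) : Prop :=
  (letI : TopologicalSpace A := ⊥; IsClosed X) ∧
    ∀ x ∈ X, ∀ g : G, (fun h => x (g⁻¹ * h)) ∈ X

/-- A pattern with finite support over the alphabet `A`. -/
structure Pattern (G : Type) (A : Type) where
  supp : Finset G
  val : (g : G) → g ∈ supp → A

/-- The pattern `p` occurs in the configuration `x` at position `g`. -/
def PatternOccurs {A : Type} (p : Pattern G A) (x : G → A) (g : G) : Prop :=
  ∀ (h : G) (hh : h ∈ p.supp), x (g * h) = p.val h hh

/-- The subshift defined by a set of forbidden patterns. -/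
def XPat {A : Type} (Fs : Set (Pattern G A)) : Set (G → A) :=
  {x | ¬ ∃ (g : G) (p : Pattern G A), p ∈ Fs ∧ PatternOccurs p x g}

/-- A subshift of finite type: defined by a finite set of forbidden patterns. -/
def IsSFT {A : Type} (X : Set (G → A)) : Prop :=
  ∃ Fs : Set (Pattern G A), Fs.Finite ∧ X = XPat Fs

/-- A witness that `X` is sofic: an SFT `Y` over a finite alphabet `B` together with a factor
code (continuous shift-equivariant surjection) from `Y` onto `X`. -/
structure SoficVia (G : Type) [Group G] {A : Type} (X : Set (G → A)) : Type 1 where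
  B : Type
  finB : Fintype B
  Y : Set (G → B)
  sft : IsSFT Y
  subY : IsSubshift Y
  phi : (G → B) → (G → A)
  cont : letI : TopologicalSpace B := ⊥
         letI : TopologicalSpace A := ⊥
         ContinuousOn phi Y
  equiv : ∀ y ∈ Y, ∀ g : G, phi (fun h => y (g⁻¹ * h)) = fun h => phi y (g⁻¹ * h)
  image : phi '' Y = X

/-- A subshift is sofic if it is the image of an SFT under a factor code. -/
def IsSofic {A : Type} (X : Set (G → A)) : Prop :=
  Nonempty (SoficVia G X)

/-- A factor code from `X` onto `Y`: continuous (discrete product topologies),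
shift-equivariant and surjective. -/
def FactorCode {A B : Type} (X : Set (G → A)) (Y : Set (G → B))
    (φ : (G → A) → (G → B)) : Prop :=
  (letI : TopologicalSpace A := ⊥
   letI : TopologicalSpace B := ⊥
   ContinuousOn φ X) ∧
  (∀ x ∈ X, ∀ g : G, φ (fun h => x (g⁻¹ * h)) = fun h => φ x (g⁻¹ * h)) ∧
  φ '' X = Y

/-- Two subshifts are conjugate if there is a shift-equivariant homeomorphism between them. -/
def Conjugate {A B : Type} (X : Set (G → A)) (Y : Set (G → B)) : Prop :=
  ∃ (φ : (G → A) → (G → B)) (ψ : (G → B) → (G → A)),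
    FactorCode X Y φ ∧ FactorCode Y X ψ ∧
    (∀ x ∈ X, ψ (φ x) = x) ∧ (∀ y ∈ Y, φ (ψ y) = y)

/-- The one-or-less subshift: configurations with at most one occurrence of the symbol `1`
(represented by `true`). -/
def Xle1 (G : Type) : Set (G → Bool) :=
  {x | ∀ g h : G, x g = true → x h = true → g = h}

/-! ### `G`-machines -/

/-- A `G`-machine: finite set of states, finite tape alphabet `A` with a blank symbol, initial
state, accepting states, and a transition function moving with the generators `Fin k`. -/
structure GMachine (k : ℕ) (A : Type) : Type 1 where
  Q : Type
  finQ : Fintype Q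
  blank : A
  q0 : Q
  QF : Set Q
  delta : A × Q → A × Q × Fin k

/-- One step of a `G`-machine in the fixed head model: if `δ(x(1),q) = (a,q',s)` then the new
configuration is `σ_{s⁻¹} x̃` where `x̃` is `x` with the value at `1` replaced by `a`. -/
def GMachine.step {k : ℕ} {A : Type} (M : GMachine k A) (S : Fin k → G) :
    (G → A) × M.Q → (G → A) × M.Q :=
  fun xq =>
    let t := M.delta (xq.1 1, xq.2)
    let xt : G → A := Function.update xq.1 1 t.1
    (fun h => xt (S t.2.2 * h), t.2.1)

/-- The configuration which equals the pattern `p` on its support and `blank` elsewhere. -/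
def Pattern.config {A : Type} (p : Pattern G A) (blank : A) : G → A :=
  fun g => if h : g ∈ p.supp then p.val g h else blank

/-- The `G`-machine `M` accepts the pattern `p` if starting from the configuration `x^p` in the
initial state it eventually reaches an accepting state. -/
def GMachine.Accepts {k : ℕ} {A : Type} (M : GMachine k A) (S : Fin k → G)
    (p : Pattern G A) : Prop :=
  ∃ n : ℕ, ((M.step S)^[n] (p.config M.blank, M.q0)).2 ∈ M.QF

/-- A set of patterns is `G`-recursively enumerable if some `G`-machine accepts exactly its
elements. -/
def GRecEnum {k : ℕ} (S : Fin k → G) {A : Type} (L : Set (Pattern G A)) : Prop :=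
  ∃ M : GMachine k A, ∀ p : Pattern G A, M.Accepts S p ↔ p ∈ L

/-- The consistent pattern coding `c` defines the pattern `p`. -/
def Defines {k : ℕ} (S : Fin k → G) {A : Type} (c : PatternCoding k A)
    (p : Pattern G A) : Prop :=
  (∀ g : G, g ∈ p.supp ↔ ∃ q ∈ c, wordEval S q.1 = g) ∧
  ∀ q ∈ c, ∀ hg : wordEval S q.1 ∈ p.supp, p.val (wordEval S q.1) hg = q.2

/-- `p(C)`: the set of patterns defined by the consistent pattern codings of `C`. -/
def patternsOf {k : ℕ} (S : Fin k → G) {A : Type} (C : Set (PatternCoding k A)) :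
    Set (Pattern G A) :=
  {p | ∃ c ∈ C, Consistent S c ∧ Defines S c p}

/-- A set of patterns is closed by extensions if any pattern extending a pattern of the set
also belongs to the set. -/
def ClosedByExtensions {A : Type} (L : Set (Pattern G A)) : Prop :=
  ∀ (p₁ p₂ : Pattern G A) (hsub : p₁.supp ⊆ p₂.supp),
    (∀ (g : G) (hg : g ∈ p₁.supp), p₂.val g (hsub hg) = p₁.val g hg) →
    p₁ ∈ L → p₂ ∈ L

/-! ### Balls, ends, amenability -/

/-- The ball of radius `n` in the word metric given by `S`. -/
def ballS {k : ℕ} (S : Fin k → G) (n : ℕ) : Set G :=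
  {x | ∃ w : List (Fin k), w.length ≤ n ∧ wordEval S w = x}

/-- Adjacency in the Cayley graph restricted to the set `V`. -/
def Adj {k : ℕ} (S : Fin k → G) (V : Set G) (a b : G) : Prop :=
  a ∈ V ∧ b ∈ V ∧ ∃ i, a * S i = b

/-- Reachability inside `V` in the Cayley graph of `(G,S)`. -/
def Reach {k : ℕ} (S : Fin k → G) (V : Set G) (a b : G) : Prop :=
  Relation.ReflTransGen (Adj S V) a b

/-- `G` has at least two ends: for some `n`, the complement of the ball of radius `n` in the
Cayley graph has at least two infinite connected components. -/
def HasTwoOrMoreEnds {k : ℕ} (S : Fin k → G) : Prop :=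
  ∃ (n : ℕ) (x y : G), x ∉ ballS S n ∧ y ∉ ballS S n ∧
    {z | Reach S (ballS S n)ᶜ x z}.Infinite ∧
    {z | Reach S (ballS S n)ᶜ y z}.Infinite ∧
    ¬ Reach S (ballS S n)ᶜ x y

/-- The Følner condition: `G` is amenable. -/
def FolnerAmenable (G : Type) [Group G] : Prop :=
  ∀ (K : Finset G) (ε : ℝ), 0 < ε →
    ∃ F : Finset G, F.Nonempty ∧ ∀ k ∈ K,
      ((F \ F.image (fun x => x * k)).card : ℝ) < ε * F.card

/-! ### `G × ℤ`, presentations, hardness and the domino problems -/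

/-- Generators of `G × ℤ`: the generators of `G` paired with `0`, together with `(1,±1)`. -/
def prodGens {k : ℕ} (S : Fin k → G) : Fin (k + 2) → G × Multiplicative ℤ :=
  fun i =>
    if h : (i : ℕ) < k then (S ⟨i, h⟩, 1)
    else if (i : ℕ) = k then (1, Multiplicative.ofAdd 1)
    else (1, Multiplicative.ofAdd (-1))

/-- The element of the free group over the generator indices represented by a word. -/
def freeWord {k : ℕ} (w : List (Fin k)) : FreeGroup (Fin k) :=
  (w.map FreeGroup.of).prod

/-- `G` is recursively presented with respect to `S`: there is a recursively enumerable set of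
relators (words over the generators) whose normal closure in the free group over the
generator indices is the kernel of the evaluation map. -/
def RecursivelyPresented {k : ℕ} (S : Fin k → G) : Prop :=
  ∃ R : Set (List (Fin k)), REPred (· ∈ R) ∧
    MonoidHom.ker (FreeGroup.lift S) = Subgroup.normalClosure (freeWord '' R)

/-- `L` is hard for the class of predicates recursively enumerable in the oracle `O`
(equivalently, hard for the halting problem of machines with oracle `O`): every
such predicate many-one reduces to `L` via a computable function. -/
def OracleREHard {α : Type} [Primcodable α] (O : ℕ →. ℕ) (L : Set α) : Prop :=
  ∀ p : ℕ → Prop, RePredIn O p → ∃ f : ℕ → α, Computable f ∧ ∀ n, p n ↔ f n ∈ L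

/-- The domino problem of `(K,T)`: pairs `(N, F)` of an alphabet size and a finite list of
pattern codings over `ℕ` such that no configuration with symbols `< N` avoids `F`. -/
def DP {K : Type} [Group K] {m : ℕ} (T : Fin m → K) : Set (ℕ × List (PatternCoding m ℕ)) :=
  {q | ¬ ∃ x : K → ℕ, (∀ g, x g < q.1) ∧ x ∈ XC T {c | c ∈ q.2}}

/-- The origin constrained domino problem of `(K,T)`: triples `((N,a),F)` such that no
configuration with symbols `< N` and the symbol `a` at the origin avoids `F`. -/
def OCDP {K : Type} [Group K] {m : ℕ} (T : Fin m → K) :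
    Set ((ℕ × ℕ) × List (PatternCoding m ℕ)) :=
  {q | ¬ ∃ x : K → ℕ, (∀ g, x g < q.1.1) ∧ x 1 = q.1.2 ∧ x ∈ XC T {c | c ∈ q.2}}

/-!
A coding `c` lies in `C_max` iff its cylinder misses `X = X_C`. By compactness of `A^G` this
happens iff finitely many translates of cylinders of codings of `C` cover it, which is witnessed
by a finite certificate: a list `L` of codings of `C`, each with a word for its translate, and a
list `E` of pairs of words representing the same group element. Only finitely many words occur,
so checking the certificate amounts to checking that every assignment of symbols to these words
which extends `c` and respects `E` contains a translate from `L`, a primitive recursive test.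
Equalities between words are all the certificate may assert, since only these are enumerated by
the word problem; compactness yields a certificate listing every equality among its words.
Enumerating certificates while enumerating `C` and `WP(G)` shows that `C_max` is r.e.

The equality `X = X_{C_max}` holds for every `X = X_C`, as `C ⊆ C_max` and `X_C` is
shift-invariant.
-/

end SDG

namespace REPred

variable {α β : Type*} [Primcodable α] [Primcodable β]

theorem comp {p : β → Prop} (hp : REPred p) {f : α → β} (hf : Computable f) :
    REPred fun a => p (f a) :=
  Partrec.comp hp hf

theorem exists_primrec_stage {p : α → Prop} (hp : REPred p) :
    ∃ g : α → ℕ → Bool, Primrec₂ g ∧ (∀ a, Monotone (g a)) ∧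
      ∀ a, p a ↔ ∃ n, g a n = true := by
  obtain ⟨cd, hcd⟩ := Nat.Partrec.Code.exists_code.1 hp
  refine ⟨fun a n => (cd.evaln n (Encodable.encode a)).isSome,
    Primrec.option_isSome.comp (Nat.Partrec.Code.primrec_evaln.comp
      ((Primrec.snd.pair (Primrec.const cd)).pair (Primrec.encode.comp Primrec.fst))),
    fun a m n hmn => Bool.le_iff_imp.2 fun h => ?_, fun a => ?_⟩
  · obtain ⟨x, hx⟩ := Option.isSome_iff_exists.1 h
    exact Option.isSome_iff_exists.2 ⟨x, Nat.Partrec.Code.evaln_mono hmn hx⟩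
  · have hdom : p a ↔ (cd.eval (Encodable.encode a)).Dom := by
      simp only [hcd, Encodable.encodek, Part.coe_some, Part.bind_some, Part.map_Dom]
      exact ⟨fun h => ⟨h, trivial⟩, fun h => h.1⟩
    simp only [hdom, Part.dom_iff_mem, Nat.Partrec.Code.evaln_complete, Option.isSome_iff_exists]
    exact ⟨fun ⟨x, n, hx⟩ => ⟨n, x, hx⟩, fun ⟨n, x, hx⟩ => ⟨x, n, hx⟩⟩

theorem of_exists_computable {g : α → β → Bool} (hg : Computable₂ g) :
    REPred fun a => ∃ b, g a b = true := by
  have hsearch : Computable₂ fun a n => ((Encodable.decode (α := β) n).map (g a)).getD false :=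
    (Computable.option_getD (Computable.option_map (Computable.decode.comp Computable.snd)
      (hg.comp (Computable.fst.comp Computable.fst) Computable.snd).to₂)
      (Computable.const false)).to₂
  refine (Partrec.rfind hsearch.partrec₂).dom_re.of_eq fun a => ?_
  simp only [Nat.rfind_dom, PFun.coe_val, Part.mem_some_iff]
  constructor
  · rintro ⟨n, hn, -⟩
    cases hb : Encodable.decode (α := β) n with
    | none => simp [hb] at hn
    | some b => exact ⟨b, by simpa [hb] using hn.symm⟩
  · rintro ⟨b, hb⟩
    exact ⟨Encodable.encode b, by simp [Encodable.encodek, hb], fun _ => trivial⟩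

theorem exists_prod {p : α × β → Prop} (hp : REPred p) : REPred fun a => ∃ b, p (a, b) := by
  obtain ⟨g, hg, -, hgp⟩ := exists_primrec_stage hp
  refine (of_exists_computable (β := β × ℕ)
    (hg.comp (Primrec.fst.pair (Primrec.fst.comp Primrec.snd))
      (Primrec.snd.comp Primrec.snd)).to₂.to_comp).of_eq fun a => ?_
  simp only [Prod.exists, ← hgp]

theorem and {p q : α → Prop} (hp : REPred p) (hq : REPred q) :
    REPred fun a => p a ∧ q a := by
  obtain ⟨g, hg, hgm, hgp⟩ := exists_primrec_stage hp
  obtain ⟨h, hh, hhm, hhq⟩ := exists_primrec_stage hq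
  refine (of_exists_computable (Primrec.and.comp hg hh).to₂.to_comp).of_eq fun a => ?_
  simp only [hgp, hhq, Bool.and_eq_true]
  refine ⟨fun ⟨n, hg, hh⟩ => ⟨⟨n, hg⟩, ⟨n, hh⟩⟩, fun ⟨⟨m, hm⟩, ⟨n, hn⟩⟩ => ⟨max m n, ?_, ?_⟩⟩
  · exact Bool.le_iff_imp.1 (hgm a (le_max_left m n)) hm
  · exact Bool.le_iff_imp.1 (hhm a (le_max_right m n)) hn

theorem forall_mem_list {p : β → Prop} (hp : REPred p) {f : α → List β} (hf : Primrec f) :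
    REPred fun a => ∀ b ∈ f a, p b := by
  obtain ⟨g, hg, hgm, hgp⟩ := exists_primrec_stage hp
  have hall : PrimrecRel fun a n => ∀ b ∈ f a, g b n = true :=
    (PrimrecRel.forall_mem_list (PrimrecRel.comp₂ Primrec.eq hg (Primrec₂.const true))).comp
      (hf.comp Primrec.fst) Primrec.snd
  refine (of_exists_computable hall.decide.to_comp).of_eq fun a => ?_
  simp only [decide_eq_true_eq, hgp]
  refine ⟨fun ⟨n, hn⟩ b hb => ⟨n, hn b hb⟩, fun h => ?_⟩
  have hev : ∀ b ∈ f a, ∀ᶠ n in Filter.atTop, g b n = true := fun b hb =>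
    let ⟨m, hm⟩ := h b hb
    Filter.eventually_atTop.2 ⟨m, fun n hmn => Bool.le_iff_imp.1 (hgm b hmn) hm⟩
  exact ((f a).finite_toSet.eventually_all.2 hev).exists

end REPred

theorem Primrec.list_sections {α : Type*} [Primcodable α] : Primrec (@List.sections α) := by
  open Primrec in
  have hstep : Primrec₂ fun (_ : List (List α)) (p : List α × List (List α)) =>
      p.2.flatMap fun s => p.1.map (· :: s) :=
    (list_flatMap (snd.comp snd) (list_map (fst.comp (snd.comp fst))
      (list_cons.comp snd (snd.comp fst)).to₂).to₂).to₂
  refine (Primrec.list_foldr Primrec.id (Primrec.const [[]]) hstep).of_eq fun L => ?_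
  induction L with
  | nil => rfl
  | cons l L ih => exact congrArg (List.flatMap fun s => l.map (· :: s)) ih

theorem PrimrecRel.list_mem {α : Type*} [Primcodable α] :
    PrimrecRel fun (a : α) (l : List α) => a ∈ l :=
  ((PrimrecRel.exists_mem_list Primrec.eq).comp Primrec.snd Primrec.fst).of_eq fun _ => by simp

theorem isClopen_setOf_forall_mem_list {ι γ A : Type*} [TopologicalSpace A] [DiscreteTopology A]
    (l : List ι) (f : ι → γ) (a : ι → A) :
    IsClopen {x : γ → A | ∀ i ∈ l, x (f i) = a i} := by
  have hset : {x : γ → A | ∀ i ∈ l, x (f i) = a i} =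
      ⋂ i ∈ l.toFinset, (fun x : γ → A => x (f i)) ⁻¹' {a i} := by
    ext x
    simp
  rw [hset]
  exact isClopen_biInter_finset fun i _ => (isClopen_discrete _).preimage (continuous_apply _)

namespace SDG

variable {G : Type} [Group G]

section Words

variable {k : ℕ} (S : Fin k → G)

theorem wordEval_append (w v : List (Fin k)) :
    wordEval S (w ++ v) = wordEval S w * wordEval S v := by
  simp [wordEval]

theorem wordEval_map_reverse {j : Fin k → Fin k} (hj : ∀ i, S (j i) = (S i)⁻¹)
    (w : List (Fin k)) : wordEval S (w.map j).reverse = (wordEval S w)⁻¹ := by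
  simp [wordEval, List.prod_inv_reverse, List.map_reverse, Function.comp_def, hj]

variable {S}

theorem IsGenData.exists_wordEval_eq (hS : IsGenData S) (g : G) : ∃ w, wordEval S w = g := by
  choose j hj using hS.2.1
  have hg : g ∈ Subgroup.closure (Set.range S) := hS.2.2 ▸ Subgroup.mem_top g
  induction hg using Subgroup.closure_induction with
  | mem _ h =>
    obtain ⟨i, rfl⟩ := h
    exact ⟨[i], by simp [wordEval]⟩
  | one => exact ⟨[], rfl⟩
  | mul _ _ _ _ h₁ h₂ =>
    obtain ⟨⟨u, rfl⟩, ⟨v, rfl⟩⟩ := And.intro h₁ h₂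
    exact ⟨u ++ v, wordEval_append S u v⟩
  | inv _ _ h =>
    obtain ⟨u, rfl⟩ := h
    exact ⟨(u.map j).reverse, wordEval_map_reverse S hj u⟩

theorem rePred_wordEval_eq {j : Fin k → Fin k} (hj : ∀ i, S (j i) = (S i)⁻¹)
    (hWP : REPred (· ∈ WP S)) :
    REPred fun e : List (Fin k) × List (Fin k) => wordEval S e.1 = wordEval S e.2 := by
  have hrel : Primrec fun e : List (Fin k) × List (Fin k) => e.1 ++ (e.2.map j).reverse :=
    Primrec.list_append.comp Primrec.fst
      (Primrec.list_reverse.comp (Primrec.list_map Primrec.snd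
        ((Primrec.dom_finite j).comp Primrec.snd).to₂))
  refine (REPred.comp hWP hrel.to_comp).of_eq fun e => ?_
  simp [WP, wordEval_append, wordEval_map_reverse S hj, mul_inv_eq_one]

end Words

section MaximalCodings

variable {k : ℕ} {A : Type} (S : Fin k → G)

def maximalCodings (X : Set (G → A)) : Set (PatternCoding k A) :=
  {c | ¬ ∃ x ∈ X, ∀ p ∈ c, x (wordEval S p.1) = p.2}

theorem XC_maximalCodings_XC (C : Set (PatternCoding k A)) :
    XC S (maximalCodings S (XC S C)) = XC S C := by
  ext x
  constructor
  · rintro hx ⟨g, c, hc, hcx⟩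
    exact hx ⟨g, c, fun ⟨y, hy, hcy⟩ => hy ⟨1, c, hc, by simpa using hcy⟩, hcx⟩
  · rintro hx ⟨g, c, hc, hcx⟩
    refine hc ⟨fun h => x (g * h), fun ⟨g', d, hd, hdx⟩ => hx ⟨g * g', d, hd, ?_⟩, hcx⟩
    simpa [mul_assoc] using hdx

variable {S}

theorem exists_list_cover_of_mem_maximalCodings [Finite A] {C : Set (PatternCoding k A)}
    {c : PatternCoding k A} (hc : c ∈ maximalCodings S (XC S C)) :
    ∃ l : List (G × PatternCoding k A), (∀ e ∈ l, e.2 ∈ C) ∧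
      ∀ x : G → A, (∀ p ∈ c, x (wordEval S p.1) = p.2) →
        ∃ e ∈ l, ∀ q ∈ e.2, x (e.1 * wordEval S q.1) = q.2 := by
  let _ : TopologicalSpace A := ⊥
  have _ : DiscreteTopology A := ⟨rfl⟩
  have hcompact := (isClopen_setOf_forall_mem_list c (wordEval S ∘ Prod.fst) Prod.snd).isClosed
    |>.isCompact
  obtain ⟨t, htC, htfin, hcover⟩ := hcompact.elim_finite_subcover_image
    (b := {e : G × PatternCoding k A | e.2 ∈ C})
    (c := fun e => {x : G → A | ∀ q ∈ e.2, x (e.1 * wordEval S q.1) = q.2})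
    (fun e _ => (isClopen_setOf_forall_mem_list e.2 _ Prod.snd).isOpen)
    (fun x hx => Set.mem_iUnion₂.2 (by simpa [XC] using fun hX => hc ⟨x, hX, hx⟩))
  obtain ⟨t, rfl⟩ := htfin.exists_finset_coe
  refine ⟨t.toList, fun e he => htC (Finset.mem_toList.1 he), fun x hx => ?_⟩
  obtain ⟨e, he, hxe⟩ := Set.mem_iUnion₂.1 (hcover hx)
  exact ⟨e, Finset.mem_toList.2 he, hxe⟩

end MaximalCodings

def assignments {α : Type*} (B : Type*) [Fintype B] (W : List α) : List (List (α × B)) :=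
  (W.map fun w => Finset.univ.toList.map (w, ·)).sections

theorem mem_assignments {α B : Type*} [Fintype B] {W : List α} {d : List (α × B)} :
    d ∈ assignments B W ↔ d.map Prod.fst = W := by
  simp only [assignments, List.mem_sections, List.forall₂_map_right_iff, List.mem_map,
    Finset.mem_toList, Finset.mem_univ, true_and]
  rw [← List.forall₂_eq_eq_eq, List.forall₂_map_left_iff]
  simp only [Prod.ext_iff, exists_and_left, exists_eq, and_true, eq_comm]

theorem primrec_assignments {α B : Type*} [Primcodable α] [Primcodable B] [Fintype B] :
    Primrec (assignments (α := α) B) :=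
  open Primrec in
  list_sections.comp (list_map Primrec.id
    (list_map (const _) (pair (snd.comp fst) snd).to₂).to₂)

section Certificate

variable {k : ℕ} {A : Type}

-- The empty word makes every assignment supply a symbol, so that `A` is seen to be nonempty.
def certWords (c : PatternCoding k A) (L : List (List (Fin k) × PatternCoding k A)) :
    List (List (Fin k)) :=
  [] :: (c.map Prod.fst ++ L.flatMap fun e => e.2.map fun q => e.1 ++ q.1)

theorem mem_certWords_of_mem_left {c : PatternCoding k A} {L} {p} (hp : p ∈ c) :
    p.1 ∈ certWords c L :=
  List.mem_cons_of_mem _ (List.mem_append_left _ (List.mem_map_of_mem hp))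

theorem mem_certWords_of_mem_right {c : PatternCoding k A} {L} {e} (he : e ∈ L) {q}
    (hq : q ∈ e.2) : e.1 ++ q.1 ∈ certWords c L :=
  List.mem_cons_of_mem _ (List.mem_append_right _
    (List.mem_flatMap.2 ⟨e, he, List.mem_map_of_mem hq⟩))

def Refutes [Fintype A] (c : PatternCoding k A) (L : List (List (Fin k) × PatternCoding k A))
    (E : List (List (Fin k) × List (Fin k))) : Prop :=
  ∀ d ∈ assignments A (certWords c L), (∀ p ∈ c, p ∈ d) →
    (∀ p ∈ d, ∀ q ∈ d, (p.1, q.1) ∈ E → p.2 = q.2) → ∃ e ∈ L, ∀ q ∈ e.2, (e.1 ++ q.1, q.2) ∈ d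

variable {S : Fin k → G}

theorem Consistent.exists_extension [Nonempty A] {d : PatternCoding k A} (hd : Consistent S d) :
    ∃ x : G → A, ∀ p ∈ d, x (wordEval S p.1) = p.2 := by
  refine ⟨fun g => if h : ∃ p ∈ d, wordEval S p.1 = g then h.choose.2
    else Classical.arbitrary A, fun p hp => ?_⟩
  have h : ∃ q ∈ d, wordEval S q.1 = wordEval S p.1 := ⟨p, hp, rfl⟩
  dsimp only
  rw [dif_pos h]
  exact hd _ h.choose_spec.1 p hp h.choose_spec.2

variable [Fintype A] {C : Set (PatternCoding k A)} {c : PatternCoding k A}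

theorem Refutes.mem_maximalCodings {L : List (List (Fin k) × PatternCoding k A)}
    {E : List (List (Fin k) × List (Fin k))} (hLC : ∀ e ∈ L, e.2 ∈ C)
    (hE : ∀ e ∈ E, wordEval S e.1 = wordEval S e.2) (h : Refutes c L E) :
    c ∈ maximalCodings S (XC S C) := by
  rintro ⟨x, hx, hxc⟩
  have hmem : ∀ {w a}, (w, a) ∈ (certWords c L).map (fun w => (w, x (wordEval S w))) ↔
      w ∈ certWords c L ∧ x (wordEval S w) = a := fun {w a} => by
    simp only [List.mem_map, Prod.mk.injEq]
    exact ⟨fun ⟨w', hw', hww', hw'a⟩ => hww' ▸ ⟨hw', hw'a⟩, fun ⟨hw, hwa⟩ => ⟨w, hw, rfl, hwa⟩⟩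
  obtain ⟨e, heL, he⟩ := h _ (mem_assignments.2 (by simp [Function.comp_def]))
    (fun p hp => hmem.2 ⟨mem_certWords_of_mem_left hp, hxc p hp⟩)
    (fun p hp q hq hpq => by
      rw [← (hmem.1 hp).2, ← (hmem.1 hq).2, hE _ hpq])
  exact hx ⟨wordEval S e.1, e.2, hLC e heL, fun q hq => by
    simpa [wordEval_append] using ((hmem.1 (he q hq)).2)⟩

theorem exists_refutes_of_mem_maximalCodings (hS : IsGenData S)
    (hc : c ∈ maximalCodings S (XC S C)) :
    ∃ L E, (∀ e ∈ L, e.2 ∈ C) ∧ (∀ e ∈ E, wordEval S e.1 = wordEval S e.2) ∧ Refutes c L E := by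
  obtain ⟨l, hlC, hcover⟩ := exists_list_cover_of_mem_maximalCodings hc
  choose word hword using hS.exists_wordEval_eq
  set L := l.map fun e => (word e.1, e.2)
  set W := certWords c L
  refine ⟨L, (W ×ˢ W).filter fun e => wordEval S e.1 = wordEval S e.2, ?_, ?_, ?_⟩
  · simp only [L, List.forall_mem_map]
    exact hlC
  · intro e he
    simpa using (List.mem_filter.1 he).2
  intro d hd hcd hdE
  have hdW : d.map Prod.fst = W := mem_assignments.1 hd
  have hmemW : ∀ {w}, w ∈ W → ∃ a, (w, a) ∈ d := fun {w} hw => by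
    rw [← hdW] at hw
    obtain ⟨p, hp, rfl⟩ := List.mem_map.1 hw
    exact ⟨p.2, hp⟩
  have hcons : Consistent S d := fun p hp q hq hpq => hdE p hp q hq <| List.mem_filter.2
    ⟨List.mem_product.2 ⟨hdW ▸ List.mem_map_of_mem hp, hdW ▸ List.mem_map_of_mem hq⟩,
      by simpa using hpq⟩
  obtain ⟨a, -⟩ := hmemW (List.mem_cons_self : [] ∈ W)
  have : Nonempty A := ⟨a⟩
  obtain ⟨x, hx⟩ := hcons.exists_extension
  obtain ⟨e, he, hxe⟩ := hcover x fun p hp => hx p (hcd p hp)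
  have heL : (word e.1, e.2) ∈ L := List.mem_map_of_mem he
  refine ⟨_, heL, fun q hq => ?_⟩
  obtain ⟨b, hb⟩ := hmemW (mem_certWords_of_mem_right heL hq)
  have hbq := hx _ hb
  rw [wordEval_append, hword, hxe q hq] at hbq
  rwa [hbq]

theorem mem_maximalCodings_iff (hS : IsGenData S) :
    c ∈ maximalCodings S (XC S C) ↔
      ∃ L E, (∀ e ∈ L, e.2 ∈ C) ∧ (∀ e ∈ E, wordEval S e.1 = wordEval S e.2) ∧
        Refutes c L E :=
  ⟨exists_refutes_of_mem_maximalCodings hS, fun ⟨_, _, hLC, hE, h⟩ => h.mem_maximalCodings hLC hE⟩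

end Certificate

section CertificatePrimrec

open Primrec

variable {k : ℕ} {A : Type} [Primcodable A]

theorem primrec_certWords : Primrec₂ (certWords (k := k) (A := A)) :=
  (list_cons.comp (const []) (list_append.comp (list_map fst (fst.comp snd).to₂)
    (list_flatMap snd (list_map (snd.comp snd)
      (list_append.comp (fst.comp (snd.comp fst)) (fst.comp snd)).to₂).to₂))).to₂

theorem primrecPred_refutes [Fintype A] :
    PrimrecPred fun x : PatternCoding k A × List (List (Fin k) × PatternCoding k A) ×
      List (List (Fin k) × List (Fin k)) => Refutes x.1 x.2.1 x.2.2 := by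
  have hsub : PrimrecRel fun (c d : PatternCoding k A) => ∀ p ∈ c, p ∈ d :=
    PrimrecRel.forall_mem_list PrimrecRel.list_mem
  have hcons : PrimrecRel fun (d : PatternCoding k A) (E : List (List (Fin k) × List (Fin k))) =>
      ∀ p ∈ d, ∀ q ∈ d, (p.1, q.1) ∈ E → p.2 = q.2 := by
    have hpq : PrimrecRel fun (q : List (Fin k) × A)
        (r : (List (Fin k) × A) × List (List (Fin k) × List (Fin k))) =>
        (r.1.1, q.1) ∈ r.2 → r.1.2 = q.2 :=
      ((PrimrecRel.list_mem.comp (pair (fst.comp (fst.comp snd)) (fst.comp fst))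
          (snd.comp snd)).not.or
        (Primrec.eq.comp (snd.comp (fst.comp snd)) (snd.comp fst))).of_eq
        fun _ => imp_iff_not_or.symm
    have hq : PrimrecRel fun (p : List (Fin k) × A)
        (r : PatternCoding k A × List (List (Fin k) × List (Fin k))) =>
        ∀ q ∈ r.1, (p.1, q.1) ∈ r.2 → p.2 = q.2 :=
      (PrimrecRel.forall_mem_list hpq).comp (fst.comp snd) (pair fst (snd.comp snd))
    exact (PrimrecRel.forall_mem_list hq).comp fst Primrec.id
  have hocc : PrimrecRel fun (L : List (List (Fin k) × PatternCoding k A))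
      (d : PatternCoding k A) =>
      ∃ e ∈ L, ∀ q ∈ e.2, (e.1 ++ q.1, q.2) ∈ d := by
    have hq : PrimrecRel fun (q : List (Fin k) × A)
        (r : (List (Fin k) × PatternCoding k A) × PatternCoding k A) => (r.1.1 ++ q.1, q.2) ∈ r.2 :=
      PrimrecRel.list_mem.comp (pair (list_append.comp (fst.comp (fst.comp snd)) (fst.comp fst))
        (snd.comp fst)) (snd.comp snd)
    exact PrimrecRel.exists_mem_list
      ((PrimrecRel.forall_mem_list hq).comp (snd.comp fst) Primrec.id)
  have hR : PrimrecRel fun (d : PatternCoding k A) (x : PatternCoding k A ×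
      List (List (Fin k) × PatternCoding k A) × List (List (Fin k) × List (Fin k))) =>
      (∀ p ∈ x.1, p ∈ d) → (∀ p ∈ d, ∀ q ∈ d, (p.1, q.1) ∈ x.2.2 → p.2 = q.2) →
        ∃ e ∈ x.2.1, ∀ q ∈ e.2, (e.1 ++ q.1, q.2) ∈ d :=
    ((hsub.comp (fst.comp snd) fst).not.or ((hcons.comp fst (snd.comp (snd.comp snd))).not.or
      (hocc.comp (fst.comp (snd.comp snd)) fst))).of_eq fun _ => by tauto
  exact (PrimrecRel.forall_mem_list hR).comp
    (primrec_assignments.comp (primrec_certWords.comp fst (fst.comp snd))) Primrec.id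

end CertificatePrimrec

theorem maximal_codings_re_general
    {G : Type} [Group G] {k : ℕ} (S : Fin k → G) (hS : IsGenData S)
    (hWP : REPred (· ∈ WP S))
    {A : Type} [Fintype A] [Primcodable A] (X : Set (G → A))
    (hX : EffectivelyClosed S X) :
    REPred (fun c : PatternCoding k A => ¬ ∃ x ∈ X, ∀ p ∈ c, x (wordEval S p.1) = p.2) ∧
    X = XC S {c : PatternCoding k A | ¬ ∃ x ∈ X, ∀ p ∈ c, x (wordEval S p.1) = p.2} := by
  obtain ⟨C, hC, rfl⟩ := hX
  choose j hj using hS.2.1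
  have hcert : REPred fun x : PatternCoding k A × List (List (Fin k) × PatternCoding k A) ×
      List (List (Fin k) × List (Fin k)) =>
      (∀ e ∈ x.2.1, e.2 ∈ C) ∧ (∀ e ∈ x.2.2, wordEval S e.1 = wordEval S e.2) ∧
        Refutes x.1 x.2.1 x.2.2 :=
    ((hC.comp Computable.snd).forall_mem_list (Primrec.fst.comp Primrec.snd)).and
      (((rePred_wordEval_eq hj hWP).forall_mem_list (Primrec.snd.comp Primrec.snd)).and
        primrecPred_refutes.computablePred.to_re)
  exact ⟨hcert.exists_prod.of_eq fun c => Prod.exists.trans (mem_maximalCodings_iff hS).symm,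
    (XC_maximalCodings_XC S C).symm⟩

/-- Over a recursively presented group, an effectively closed subshift is
defined by its maximal set of pattern codings, which is recursively enumerable. -/
theorem maximal_codings_re
    {G : Type} [Group G] {k : ℕ} (S : Fin k → G) (hS : IsGenData S)
    (hWP : REPred (· ∈ WP S))
    {A : Type} [Fintype A] [Primcodable A] (X : Set (G → A))
    (hsub : IsSubshift X) (hX : EffectivelyClosed S X) :
    REPred (fun c : PatternCoding k A => ¬ ∃ x ∈ X, ∀ p ∈ c, x (wordEval S p.1) = p.2) ∧
    X = XC S {c : PatternCoding k A | ¬ ∃ x ∈ X, ∀ p ∈ c, x (wordEval S p.1) = p.2} :=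
  maximal_codings_re_general S hS hWP X hX

end SDG
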